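/- arXiv:1903.10264 — 5 statements merged into one kernel-verified Lean document; each statement's English description precedes it below -/
import Mathlib

section
/- The full hyperbolic component of the Lagrangian descriptor grows exponentially with the integration time, with asymptotics lim_{τ→∞} e^{−γλτ} M^h_γ(τ) = (λ^{γ−1}/(γ 2^{γ−1}))(|A|^γ + |B|^γ); in particular the leading-order coefficient vanishes in its A-part exactly on the stable manifold (A = 0, i.e. p₁⁰ = −q₁⁰) and in its B-part exactly on the unstable manifold (B = 0, i.e. p₁⁰ = q₁⁰). -/
open Filter intervalIntegral Real

/-!
Write `u = A e^{λt}`, `v = B e^{-λt}` and `μ = γλ`. Since `s ↦ s^γ` is subadditive for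
`γ ≤ 1`, the integrand `|u + v|^γ + |u - v|^γ` (up to the factor `(λ/2)^γ`) lies between
`2(|u|^γ + |v|^γ) - 4 min(|u|^γ, |v|^γ)` and
`2(|u|^γ + |v|^γ) = 2(|A|^γ e^{μt} + |B|^γ e^{-μt})`.
The upper bound integrates to `2(|A|^γ + |B|^γ)(e^{μτ} - e^{-μτ})/μ`, while the error term
`min(|u|^γ, |v|^γ)` decays exponentially in both directions, so its integral stays bounded and
disappears after multiplication by `e^{-μτ}`.
-/

section ConcavePower

variable {γ : ℝ}

theorem abs_add_rpow_le (hγ0 : 0 ≤ γ) (hγ1 : γ ≤ 1) (x y : ℝ) :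
    |x + y| ^ γ ≤ |x| ^ γ + |y| ^ γ :=
  (rpow_le_rpow (abs_nonneg _) (abs_add_le x y) hγ0).trans
    (rpow_add_le_add_rpow (abs_nonneg _) (abs_nonneg _) hγ0 hγ1)

theorem abs_add_rpow_add_abs_sub_rpow_le (hγ0 : 0 ≤ γ) (hγ1 : γ ≤ 1) (x y : ℝ) :
    |x + y| ^ γ + |x - y| ^ γ ≤ 2 * (|x| ^ γ + |y| ^ γ) := by
  have hadd := abs_add_rpow_le hγ0 hγ1 x y
  have hsub := abs_add_rpow_le hγ0 hγ1 x (-y)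
  rw [abs_neg, ← sub_eq_add_neg] at hsub
  linarith

theorem two_mul_add_rpow_le_abs_add_rpow_add_abs_sub_rpow (hγ0 : 0 ≤ γ) (hγ1 : γ ≤ 1)
    (x y : ℝ) :
    2 * (|x| ^ γ + |y| ^ γ) ≤ |x + y| ^ γ + |x - y| ^ γ + 4 * min (|x| ^ γ) (|y| ^ γ) := by
  have hx₁ : |x| ^ γ ≤ |x + y| ^ γ + |y| ^ γ := by
    simpa using abs_add_rpow_le hγ0 hγ1 (x + y) (-y)
  have hx₂ : |x| ^ γ ≤ |x - y| ^ γ + |y| ^ γ := by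
    simpa using abs_add_rpow_le hγ0 hγ1 (x - y) y
  have hy₁ : |y| ^ γ ≤ |x + y| ^ γ + |x| ^ γ := by
    simpa using abs_add_rpow_le hγ0 hγ1 (x + y) (-x)
  have hy₂ : |y| ^ γ ≤ |x - y| ^ γ + |x| ^ γ := by
    simpa [abs_sub_comm] using abs_add_rpow_le hγ0 hγ1 (y - x) x
  rcases min_cases (|x| ^ γ) (|y| ^ γ) with ⟨h, -⟩ | ⟨h, -⟩ <;> rw [h] <;> linarith

end ConcavePower

theorem abs_mul_exp_rpow (a x γ : ℝ) : |a * exp x| ^ γ = |a| ^ γ * exp (γ * x) := by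
  rw [abs_mul, abs_of_pos (exp_pos x), mul_rpow (abs_nonneg a) (exp_pos x).le, ← exp_mul,
    mul_comm x]

section ExponentialIntegrals

variable {μ : ℝ}

theorem integral_exp_const_mul (hμ : μ ≠ 0) (a b : ℝ) :
    ∫ t in a..b, exp (μ * t) = (exp (μ * b) - exp (μ * a)) / μ := by
  rw [integral_comp_mul_left (fun t => exp t) hμ, integral_exp, smul_eq_mul, inv_mul_eq_div]

theorem integral_mul_exp_add_mul_exp_neg (hμ : μ ≠ 0) (a b τ : ℝ) :
    ∫ t in -τ..τ, (a * exp (μ * t) + b * exp (-(μ * t))) =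
      (a + b) / μ * (exp (μ * τ) - exp (-(μ * τ))) := by
  have hexp : ∀ k, IntervalIntegrable (fun t => exp (k * t)) MeasureTheory.volume (-τ) τ :=
    fun k => (by fun_prop : Continuous fun t => exp (k * t)).intervalIntegrable _ _
  simp_rw [← neg_mul]
  rw [integral_add ((hexp μ).const_mul a) ((hexp (-μ)).const_mul b), integral_const_mul,
    integral_const_mul, integral_exp_const_mul hμ, integral_exp_const_mul (neg_ne_zero.2 hμ)]
  field_simp
  ring

theorem integral_min_mul_exp_mul_exp_neg_le (hμ : 0 < μ) {a b τ : ℝ} (ha : 0 ≤ a)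
    (hb : 0 ≤ b) (hτ : 0 ≤ τ) :
    ∫ t in -τ..τ, min (a * exp (μ * t)) (b * exp (-(μ * t))) ≤ (a + b) / μ := by
  have hcont : ∀ k c, Continuous fun t => c * exp (k * t) := fun k c => by fun_prop
  have hmin : Continuous fun t => min (a * exp (μ * t)) (b * exp (-(μ * t))) := by fun_prop
  simp_rw [← neg_mul] at hmin ⊢
  -- On each half-interval, bound the minimum by the term that decays away from `0`.
  have hleft : ∫ t in -τ..0, min (a * exp (μ * t)) (b * exp (-μ * t)) ≤ a / μ := by
    calc _ ≤ ∫ t in -τ..0, a * exp (μ * t) :=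
          integral_mono_on (by linarith) (hmin.intervalIntegrable _ _)
            ((hcont μ a).intervalIntegrable _ _) fun t _ => min_le_left _ _
      _ = a / μ * (1 - exp (-(μ * τ))) := by
          rw [integral_const_mul, integral_exp_const_mul hμ.ne']
          simp only [mul_zero, exp_zero, mul_neg]; ring
      _ ≤ a / μ := mul_le_of_le_one_right (by positivity) (by linarith [exp_pos (-(μ * τ))])
  have hright : ∫ t in (0 : ℝ)..τ, min (a * exp (μ * t)) (b * exp (-μ * t)) ≤ b / μ := by
    calc _ ≤ ∫ t in (0 : ℝ)..τ, b * exp (-μ * t) :=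
          integral_mono_on hτ (hmin.intervalIntegrable _ _)
            ((hcont (-μ) b).intervalIntegrable _ _) fun t _ => min_le_right _ _
      _ = b / μ * (1 - exp (-(μ * τ))) := by
          rw [integral_const_mul, integral_exp_const_mul (neg_ne_zero.2 hμ.ne')]
          simp only [neg_mul, mul_zero, exp_zero]; ring
      _ ≤ b / μ := mul_le_of_le_one_right (by positivity) (by linarith [exp_pos (-(μ * τ))])
  rw [← integral_add_adjacent_intervals (hmin.intervalIntegrable _ 0)
    (hmin.intervalIntegrable 0 _), add_div]
  exact add_le_add hleft hright

theorem tendsto_exp_neg_mul_mul_exp_sub_exp_neg_add (hμ : 0 < μ) (C D : ℝ) :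
    Tendsto (fun τ => exp (-(μ * τ)) * (C * (exp (μ * τ) - exp (-(μ * τ))) + D)) atTop
      (nhds C) := by
  have hdecay : Tendsto (fun τ => exp (-(μ * τ))) atTop (nhds 0) :=
    tendsto_exp_atBot.comp (tendsto_neg_atTop_atBot.comp (tendsto_id.const_mul_atTop hμ))
  have hlim : Tendsto (fun s => C - C * s ^ 2 + D * s) (nhds 0) (nhds C) := by
    simpa using ((by fun_prop : Continuous fun s : ℝ => C - C * s ^ 2 + D * s).tendsto 0)
  refine (hlim.comp hdecay).congr fun τ => ?_
  have hinv : exp (-(μ * τ)) * exp (μ * τ) = 1 := by rw [← exp_add]; simp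
  simp only [Function.comp]
  linear_combination -C * hinv

end ExponentialIntegrals

section Hyperbolic

variable (A B : ℝ)

/-- `|q₁'(t)|^γ + |p₁'(t)|^γ = (λ/2)^γ * hyperbolicIntegrand A B λ γ t`. -/
noncomputable def hyperbolicIntegrand (lam γ : ℝ) (t : ℝ) : ℝ :=
  |A * exp (lam * t) + B * exp (-(lam * t))| ^ γ + |A * exp (lam * t) - B * exp (-(lam * t))| ^ γ

variable {lam γ : ℝ}

theorem continuous_hyperbolicIntegrand (hγ : 0 ≤ γ) :
    Continuous (hyperbolicIntegrand A B lam γ) := by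
  have := continuous_rpow_const hγ
  unfold hyperbolicIntegrand
  fun_prop

theorem hyperbolicIntegrand_le (hγ0 : 0 ≤ γ) (hγ1 : γ ≤ 1) (t : ℝ) :
    hyperbolicIntegrand A B lam γ t ≤
      2 * (|A| ^ γ * exp (γ * lam * t) + |B| ^ γ * exp (-(γ * lam * t))) := by
  simpa only [hyperbolicIntegrand, abs_mul_exp_rpow, mul_neg, ← mul_assoc] using
    abs_add_rpow_add_abs_sub_rpow_le hγ0 hγ1 (A * exp (lam * t)) (B * exp (-(lam * t)))

theorem two_mul_sub_le_hyperbolicIntegrand (hγ0 : 0 ≤ γ) (hγ1 : γ ≤ 1) (t : ℝ) :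
    2 * (|A| ^ γ * exp (γ * lam * t) + |B| ^ γ * exp (-(γ * lam * t))) -
        4 * min (|A| ^ γ * exp (γ * lam * t)) (|B| ^ γ * exp (-(γ * lam * t))) ≤
      hyperbolicIntegrand A B lam γ t := by
  have := two_mul_add_rpow_le_abs_add_rpow_add_abs_sub_rpow hγ0 hγ1
    (A * exp (lam * t)) (B * exp (-(lam * t)))
  simp only [abs_mul_exp_rpow, mul_neg, ← mul_assoc] at this
  rw [hyperbolicIntegrand]
  linarith

variable (hlam : 0 < lam) (hγ0 : 0 < γ) (hγ1 : γ ≤ 1)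
include hlam hγ0 hγ1

theorem integral_hyperbolicIntegrand_le {τ : ℝ} (hτ : 0 ≤ τ) :
    ∫ t in -τ..τ, hyperbolicIntegrand A B lam γ t ≤
      2 * (|A| ^ γ + |B| ^ γ) / (γ * lam) * (exp (γ * lam * τ) - exp (-(γ * lam * τ))) := by
  have hμ : γ * lam ≠ 0 := (mul_pos hγ0 hlam).ne'
  calc _ ≤ ∫ t in -τ..τ,
        2 * (|A| ^ γ * exp (γ * lam * t) + |B| ^ γ * exp (-(γ * lam * t))) :=
        integral_mono_on (by linarith)
          ((continuous_hyperbolicIntegrand A B hγ0.le).intervalIntegrable _ _)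
          ((by fun_prop : Continuous _).intervalIntegrable _ _)
          fun t _ => hyperbolicIntegrand_le A B hγ0.le hγ1 t
    _ = _ := by rw [integral_const_mul, integral_mul_exp_add_mul_exp_neg hμ]; ring

theorem le_integral_hyperbolicIntegrand {τ : ℝ} (hτ : 0 ≤ τ) :
    2 * (|A| ^ γ + |B| ^ γ) / (γ * lam) * (exp (γ * lam * τ) - exp (-(γ * lam * τ))) -
        4 * (|A| ^ γ + |B| ^ γ) / (γ * lam) ≤
      ∫ t in -τ..τ, hyperbolicIntegrand A B lam γ t := by
  have hμ : 0 < γ * lam := mul_pos hγ0 hlam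
  have hd : Continuous fun t =>
      |A| ^ γ * exp (γ * lam * t) + |B| ^ γ * exp (-(γ * lam * t)) := by fun_prop
  have he : Continuous fun t =>
      min (|A| ^ γ * exp (γ * lam * t)) (|B| ^ γ * exp (-(γ * lam * t))) := by fun_prop
  have he_int := integral_min_mul_exp_mul_exp_neg_le hμ (rpow_nonneg (abs_nonneg A) γ)
    (rpow_nonneg (abs_nonneg B) γ) hτ
  calc _ ≤ ∫ t in -τ..τ,
        (2 * (|A| ^ γ * exp (γ * lam * t) + |B| ^ γ * exp (-(γ * lam * t))) -
          4 * min (|A| ^ γ * exp (γ * lam * t)) (|B| ^ γ * exp (-(γ * lam * t)))) := by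
        rw [integral_sub ((hd.const_mul 2).intervalIntegrable _ _)
          ((he.const_mul 4).intervalIntegrable _ _), integral_const_mul, integral_const_mul,
          integral_mul_exp_add_mul_exp_neg hμ.ne']
        linear_combination 4 * he_int
    _ ≤ _ := integral_mono_on (by linarith)
          (((hd.const_mul 2).sub (he.const_mul 4)).intervalIntegrable _ _)
          ((continuous_hyperbolicIntegrand A B hγ0.le).intervalIntegrable _ _)
          fun t _ => two_mul_sub_le_hyperbolicIntegrand A B hγ0.le hγ1 t

theorem tendsto_exp_neg_mul_integral_hyperbolicIntegrand :
    Tendsto (fun τ => exp (-(γ * lam * τ)) * ∫ t in -τ..τ, hyperbolicIntegrand A B lam γ t)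
      atTop (nhds (2 * (|A| ^ γ + |B| ^ γ) / (γ * lam))) := by
  have hμ : 0 < γ * lam := mul_pos hγ0 hlam
  have hupper := tendsto_exp_neg_mul_mul_exp_sub_exp_neg_add hμ
    (2 * (|A| ^ γ + |B| ^ γ) / (γ * lam)) 0
  simp only [add_zero] at hupper
  refine tendsto_of_tendsto_of_tendsto_of_le_of_le'
    (tendsto_exp_neg_mul_mul_exp_sub_exp_neg_add hμ _ (-(4 * (|A| ^ γ + |B| ^ γ) / (γ * lam))))
    hupper ?_ ?_
  · filter_upwards [eventually_ge_atTop 0] with τ hτ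
    exact mul_le_mul_of_nonneg_left
      (by linarith [le_integral_hyperbolicIntegrand A B hlam hγ0 hγ1 hτ]) (exp_pos _).le
  · filter_upwards [eventually_ge_atTop 0] with τ hτ
    exact mul_le_mul_of_nonneg_left
      (by linarith [integral_hyperbolicIntegrand_le A B hlam hγ0 hγ1 hτ]) (exp_pos _).le

end Hyperbolic

/-- The full hyperbolic component of the Lagrangian descriptor
M^h_γ(τ) = ∫_{−τ}^{τ}(|q₁'|^γ + |p₁'|^γ) grows exponentially with the integration time:
lim_{τ→∞} e^{−γλτ} M^h_γ(τ) = (λ^{γ−1}/(γ2^{γ−1}))(|A|^γ + |B|^γ); the A-part of the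
leading coefficient vanishes exactly on the stable manifold (p₁⁰ = −q₁⁰) and the
B-part exactly on the unstable manifold (p₁⁰ = q₁⁰). -/
theorem stmt_8 (lam : ℝ) (hlam : 0 < lam) (q₁0 p₁0 : ℝ) (A B : ℝ)
    (hA : A = q₁0 + p₁0) (hB : B = q₁0 - p₁0)
    (γ : ℝ) (hγ : γ ∈ Set.Ioc (0 : ℝ) 1)
    (Mh : ℝ → ℝ)
    (hMh : ∀ τ : ℝ, Mh τ =
      ∫ t in (-τ)..τ,
        (|lam / 2 * (A * Real.exp (lam * t) - B * Real.exp (-(lam * t)))| ^ γ +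
         |lam / 2 * (A * Real.exp (lam * t) + B * Real.exp (-(lam * t)))| ^ γ)) :
    Filter.Tendsto (fun τ : ℝ => Real.exp (-(γ * lam * τ)) * Mh τ) Filter.atTop
      (nhds (lam ^ (γ - 1) / (γ * (2 : ℝ) ^ (γ - 1)) * (|A| ^ γ + |B| ^ γ))) ∧
    (|A| ^ γ = 0 ↔ p₁0 = -q₁0) ∧
    (|B| ^ γ = 0 ↔ p₁0 = q₁0) := by
  obtain ⟨hγ0, hγ1⟩ := hγ
  have hc : 0 < lam / 2 := half_pos hlam
  have hMh' : ∀ τ, Mh τ = (lam / 2) ^ γ * ∫ t in -τ..τ, hyperbolicIntegrand A B lam γ t :=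
      fun τ => by
    rw [hMh, ← integral_const_mul]
    congr 1 with t
    rw [hyperbolicIntegrand]
    rw [abs_mul, abs_mul, abs_of_pos hc, mul_rpow hc.le (abs_nonneg _),
      mul_rpow hc.le (abs_nonneg _)]
    ring
  have hconst : (lam / 2) ^ γ * (2 * (|A| ^ γ + |B| ^ γ) / (γ * lam)) =
      lam ^ (γ - 1) / (γ * 2 ^ (γ - 1)) * (|A| ^ γ + |B| ^ γ) := by
    rw [div_rpow hlam.le zero_le_two, rpow_sub hlam, rpow_sub zero_lt_two, rpow_one, rpow_one]
    field_simp
  have hzero : ∀ x : ℝ, |x| ^ γ = 0 ↔ x = 0 := fun x => by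
    rw [rpow_eq_zero (abs_nonneg x) hγ0.ne', abs_eq_zero]
  refine ⟨?_, ?_, ?_⟩
  · simpa only [hMh', mul_left_comm _ ((lam / 2) ^ γ), hconst] using
      (tendsto_exp_neg_mul_integral_hyperbolicIntegrand A B hlam hγ0 hγ1).const_mul
        ((lam / 2) ^ γ)
  · rw [hzero, hA]
    constructor <;> intro h <;> linarith
  · rw [hzero, hB, sub_eq_zero, eq_comm]
end

section
/- The elliptic component of the Lagrangian descriptor is a linearly increasing function of the integration time: writing τ = N(π/ω) + r with N a nonnegative integer and r ∈ [0, π/ω), one has M^e_γ(τ) = (4(ωR)^γ/√π) · (Γ((γ+1)/2)/Γ(γ/2 + 1)) · (τ − r) + M^e_γ(r). -/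
open Filter intervalIntegral

/-!
Writing `(p⁰, q⁰) = R (cos φ, sin φ)`, the integrand at time `t` is `(ωR)^γ k(ωt + φ)` with
`k x = |sin x|^γ + |cos x|^γ`, a function of period `π/2`. Hence `M(τ)` and `M(r)` differ by the
integral of `k` over `4N` periods, and `∫₀^{π/2} k = √π Γ((γ+1)/2) / Γ(γ/2+1)`: the substitution
`u = sin² θ` turns `∫₀^{π/2} sin^{2a-1} θ cos^{2b-1} θ dθ` into half the Beta integral `B(a, b)`,
and `Γ(1/2) = √π`.
-/

open Real MeasureTheory Set Function

theorem integral_rpow_mul_one_sub_rpow {a b : ℝ} (ha : 0 < a) (hb : 0 < b) :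
    ∫ x in (0:ℝ)..1, x ^ (a - 1) * (1 - x) ^ (b - 1) = Gamma a * Gamma b / Gamma (a + b) := by
  apply Complex.ofReal_injective
  have hbeta := Complex.betaIntegral_eq_Gamma_mul_div a b (by simpa) (by simpa)
  push_cast [← Complex.Gamma_ofReal] at hbeta ⊢
  rw [← hbeta, Complex.betaIntegral, ← intervalIntegral.integral_ofReal]
  refine integral_congr fun x hx => ?_
  rw [uIcc_of_le zero_le_one] at hx
  push_cast
  rw [Complex.ofReal_cpow hx.1, Complex.ofReal_cpow (sub_nonneg.2 hx.2)]
  push_cast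
  rfl

theorem sq_rpow_sub_one_mul_self {x : ℝ} (hx : 0 < x) (c : ℝ) :
    (x ^ 2) ^ (c - 1) * x = x ^ (2 * c - 1) := by
  rw [← rpow_two, ← rpow_mul hx.le, ← rpow_add_one hx.ne']; ring_nf

theorem integral_sin_rpow_mul_cos_rpow {a b : ℝ} (ha : 0 < a) (hb : 0 < b) :
    ∫ θ in (0:ℝ)..π / 2, sin θ ^ (2 * a - 1) * cos θ ^ (2 * b - 1) =
      Gamma a * Gamma b / (2 * Gamma (a + b)) := by
  have hmono : StrictMonoOn (fun θ => sin θ ^ 2) (Icc 0 (π / 2)) := fun x hx y hy hxy =>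
    pow_lt_pow_left₀ (strictMonoOn_sin ⟨by linarith [hx.1, pi_pos], hx.2⟩
      ⟨by linarith [hy.1, pi_pos], hy.2⟩ hxy)
      (sin_nonneg_of_nonneg_of_le_pi hx.1 (by linarith [hx.2, pi_pos])) two_ne_zero
  have himage : (fun θ => sin θ ^ 2) '' Ioo 0 (π / 2) = Ioo 0 1 := by
    rw [ContinuousOn.image_Ioo_of_strictMonoOn (by positivity) (by fun_prop) hmono]
    simp
  have hderiv : ∀ θ ∈ Ioo 0 (π / 2),
      HasDerivWithinAt (fun θ => sin θ ^ 2) (2 * sin θ * cos θ) (Ioo 0 (π / 2)) θ :=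
    fun θ _ => (by simpa using (hasDerivAt_sin θ).fun_pow 2 : HasDerivAt _ _ θ).hasDerivWithinAt
  have hsubst := integral_image_eq_integral_abs_deriv_smul measurableSet_Ioo hderiv
    (hmono.injOn.mono Ioo_subset_Icc_self) fun x => x ^ (a - 1) * (1 - x) ^ (b - 1)
  rw [himage, ← integral_Ioc_eq_integral_Ioo, ← intervalIntegral.integral_of_le zero_le_one,
    integral_rpow_mul_one_sub_rpow ha hb] at hsubst
  have hintegrand : EqOn
      (fun θ => |2 * sin θ * cos θ| • ((sin θ ^ 2) ^ (a - 1) * (1 - sin θ ^ 2) ^ (b - 1)))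
      (fun θ => 2 * (sin θ ^ (2 * a - 1) * cos θ ^ (2 * b - 1))) (Ioo 0 (π / 2)) := by
    intro θ hθ
    have hsin : 0 < sin θ := sin_pos_of_pos_of_lt_pi hθ.1 (by linarith [hθ.2, pi_pos])
    have hcos : 0 < cos θ := cos_pos_of_mem_Ioo ⟨by linarith [hθ.1, pi_pos], hθ.2⟩
    simp only [smul_eq_mul, ← cos_sq', abs_of_pos (by positivity : 0 < 2 * sin θ * cos θ),
      ← sq_rpow_sub_one_mul_self hsin, ← sq_rpow_sub_one_mul_self hcos]
    ring
  rw [setIntegral_congr_fun measurableSet_Ioo hintegrand, MeasureTheory.integral_const_mul,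
    ← integral_Ioc_eq_integral_Ioo, ← intervalIntegral.integral_of_le (by positivity)] at hsubst
  rw [div_mul_eq_div_div_swap, hsubst]
  ring

theorem periodic_abs_sin_rpow_add_abs_cos_rpow (γ : ℝ) :
    Periodic (fun x => |sin x| ^ γ + |cos x| ^ γ) (π / 2) := fun x => by
  simp [sin_add_pi_div_two, cos_add_pi_div_two, add_comm]

theorem integral_abs_sin_rpow_add_abs_cos_rpow {γ : ℝ} (hγ : 0 ≤ γ) :
    ∫ x in (0:ℝ)..π / 2, (|sin x| ^ γ + |cos x| ^ γ) =
      √π * (Gamma ((γ + 1) / 2) / Gamma (γ / 2 + 1)) := by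
  have hsin := integral_sin_rpow_mul_cos_rpow (a := (γ + 1) / 2) (b := 1 / 2)
    (by linarith) one_half_pos
  have hcos := integral_sin_rpow_mul_cos_rpow (a := 1 / 2) (b := (γ + 1) / 2)
    one_half_pos (by linarith)
  simp only [show 2 * ((γ + 1) / 2) - 1 = γ by ring, show 2 * (1 / 2 : ℝ) - 1 = 0 by ring,
    rpow_zero, mul_one, one_mul, Gamma_one_half_eq] at hsin hcos
  have habs : EqOn (fun x => |sin x| ^ γ + |cos x| ^ γ) (fun x => sin x ^ γ + cos x ^ γ)
      (uIcc 0 (π / 2)) := by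
    intro x hx
    rw [uIcc_of_le (by positivity)] at hx
    dsimp only
    rw [abs_of_nonneg (sin_nonneg_of_nonneg_of_le_pi hx.1 (by linarith [hx.2, pi_pos])),
      abs_of_nonneg (cos_nonneg_of_mem_Icc ⟨by linarith [hx.1, pi_pos], hx.2⟩)]
  have hcont : ∀ f : ℝ → ℝ, Continuous f → Continuous fun x => f x ^ γ := fun f hf =>
    hf.rpow_const fun _ => Or.inr hγ
  rw [integral_congr habs, integral_add ((hcont _ continuous_sin).intervalIntegrable _ _)
    ((hcont _ continuous_cos).intervalIntegrable _ _), hsin, hcos,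
    show (γ + 1) / 2 + 1 / 2 = γ / 2 + 1 by ring, show 1 / 2 + (γ + 1) / 2 = γ / 2 + 1 by ring]
  ring

theorem Function.Periodic.intervalIntegral_sub_nsmul_add_nsmul {E : Type*}
    [NormedAddCommGroup E] [NormedSpace ℝ E] {f : ℝ → E} {T : ℝ} (hf : Periodic f T)
    (hint : ∀ a b, IntervalIntegrable f volume a b) (n : ℕ) (a b : ℝ) :
    ∫ t in a - n • T..b + n • T, f t = (2 * n) • (∫ t in 0..T, f t) + ∫ t in a..b, f t := by
  have hperiods : ∀ s, ∫ t in s..s + n • T, f t = n • ∫ t in 0..T, f t := fun s => by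
    simpa [hf.intervalIntegral_add_eq s 0] using hf.intervalIntegral_add_zsmul_eq n s hint
  have hleft := hperiods (a - n • T)
  rw [sub_add_cancel] at hleft
  rw [← integral_add_adjacent_intervals (hint _ a) (hint a _),
    ← integral_add_adjacent_intervals (hint a b) (hint b _), hleft, hperiods b, mul_nsmul']
  abel

theorem exists_phase_shift (q p : ℝ) : ∃ φ : ℝ, ∀ x : ℝ,
    p * cos x - q * sin x = √(q ^ 2 + p ^ 2) * cos (x + φ) ∧
      q * cos x + p * sin x = √(q ^ 2 + p ^ 2) * sin (x + φ) := by
  set z : ℂ := ⟨p, q⟩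
  have hnorm : ‖z‖ = √(q ^ 2 + p ^ 2) := by
    rw [Complex.norm_def, Complex.normSq_mk]; ring_nf
  refine ⟨z.arg, fun x => ⟨?_, ?_⟩⟩
  · rw [← hnorm, cos_add]
    linear_combination -cos x * Complex.norm_mul_cos_arg z + sin x * Complex.norm_mul_sin_arg z
  · rw [← hnorm, sin_add]
    linear_combination -sin x * Complex.norm_mul_cos_arg z - cos x * Complex.norm_mul_sin_arg z

theorem continuous_abs_sin_rpow_add_abs_cos_rpow {γ : ℝ} (hγ : 0 ≤ γ) :
    Continuous fun x => |sin x| ^ γ + |cos x| ^ γ := by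
  fun_prop (disch := exact fun _ => Or.inr hγ)

theorem exists_phase_integral_abs_rpow_eq {ω : ℝ} (hω : 0 < ω) (q p γ : ℝ) :
    ∃ φ : ℝ, ∀ x : ℝ,
      ∫ t in -x..x, (|ω * (p * cos (ω * t) - q * sin (ω * t))| ^ γ +
        |-(ω * (q * cos (ω * t) + p * sin (ω * t)))| ^ γ) =
      (ω * √(q ^ 2 + p ^ 2)) ^ γ * ω⁻¹ *
        ∫ s in ω * -x + φ..ω * x + φ, (|sin s| ^ γ + |cos s| ^ γ) := by
  obtain ⟨φ, hφ⟩ := exists_phase_shift q p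
  refine ⟨φ, fun x => ?_⟩
  set R := √(q ^ 2 + p ^ 2)
  have hωR : 0 ≤ ω * R := by positivity
  have hscale : ∀ u, |ω * (R * u)| ^ γ = (ω * R) ^ γ * |u| ^ γ := fun u => by
    rw [← mul_assoc, abs_mul, abs_of_nonneg hωR, mul_rpow hωR (abs_nonneg _)]
  have hpoint : ∀ t, |ω * (p * cos (ω * t) - q * sin (ω * t))| ^ γ +
      |-(ω * (q * cos (ω * t) + p * sin (ω * t)))| ^ γ =
        (ω * R) ^ γ * (|sin (ω * t + φ)| ^ γ + |cos (ω * t + φ)| ^ γ) := fun t => by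
    rw [(hφ _).1, (hφ _).2, abs_neg, hscale, hscale]
    ring
  simp_rw [hpoint]
  rw [intervalIntegral.integral_const_mul,
    integral_comp_mul_add (fun s => |sin s| ^ γ + |cos s| ^ γ) hω.ne', smul_eq_mul, mul_assoc]

/-- The elliptic component of the Lagrangian descriptor
M^e_γ(τ) = ∫_{−τ}^{τ}(|q'|^γ + |p'|^γ) is a linearly increasing function of the
integration time: writing τ = N(π/ω) + r with N ∈ ℕ and r ∈ [0, π/ω), one has
M^e_γ(τ) = (4(ωR)^γ/√π)·(Γ((γ+1)/2)/Γ(γ/2 + 1))·(τ − r) + M^e_γ(r). -/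
theorem stmt_10 (ω : ℝ) (hω : 0 < ω) (q0 p0 : ℝ) (R : ℝ)
    (hR : R = Real.sqrt (q0 ^ 2 + p0 ^ 2))
    (γ : ℝ) (hγ : γ ∈ Set.Ioc (0 : ℝ) 1)
    (Me : ℝ → ℝ)
    (hMe : ∀ τ : ℝ, Me τ =
      ∫ t in (-τ)..τ,
        (|ω * (p0 * Real.cos (ω * t) - q0 * Real.sin (ω * t))| ^ γ +
         |-(ω * (q0 * Real.cos (ω * t) + p0 * Real.sin (ω * t)))| ^ γ)) :
    ∀ (N : ℕ) (r τ : ℝ), 0 ≤ r → r < Real.pi / ω → τ = N * (Real.pi / ω) + r →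
      Me τ = 4 * (ω * R) ^ γ / Real.sqrt Real.pi *
          (Real.Gamma ((γ + 1) / 2) / Real.Gamma (γ / 2 + 1)) * (τ - r) + Me r := by
  intro N r τ _ _ hτ
  obtain ⟨φ, hφ⟩ := exists_phase_integral_abs_rpow_eq hω q0 p0 γ
  have hleft : ω * -τ + φ = (ω * -r + φ) - (2 * N) • (π / 2) := by
    rw [hτ, nsmul_eq_mul]; field_simp; push_cast; ring
  have hright : ω * τ + φ = (ω * r + φ) + (2 * N) • (π / 2) := by
    rw [hτ, nsmul_eq_mul]; field_simp; push_cast; ring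
  rw [hMe, hMe, hφ, hφ, ← hR, hleft, hright,
    (periodic_abs_sin_rpow_add_abs_cos_rpow γ).intervalIntegral_sub_nsmul_add_nsmul
      (continuous_abs_sin_rpow_add_abs_cos_rpow hγ.1.le).intervalIntegrable,
    integral_abs_sin_rpow_add_abs_cos_rpow hγ.1.le, hτ, nsmul_eq_mul]
  have hπ : √π * √π = π := mul_self_sqrt pi_pos.le
  field_simp
  push_cast
  linear_combination (ω * R) ^ γ * 4 * N * Gamma ((γ + 1) / 2) / Gamma ((γ + 2) / 2) * hπ
end

section
/- The time average of the elliptic component of the Lagrangian descriptor converges: lim_{τ→∞} (1/(2τ)) M^e_γ(τ) = (2/π)(ωR)^γ B((γ+1)/2, 1/2), where B is the Beta function; in particular the limit depends only on the radius R of the circle traced by the bath mode, hence is constant on each periodic orbit. -/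
open Filter intervalIntegral

/-!
Writing `(q⁰, p⁰) = R (cos φ, sin φ)`, the integrand of `M^e_γ` becomes
`(ωR)^γ (|sin|^γ + |cos|^γ)(ωt - φ)`, a continuous periodic function of `t`, so its symmetric
time average converges to its mean over one period, `(ωR)^γ / (2π)` times
`∫₀^{2π} (|sin s|^γ + |cos s|^γ) ds = 8 ∫₀^{π/2} sin^γ`. The substitution `x = sin² t`
turns `2 ∫₀^{π/2} sin^γ` into the Beta integral `B((γ+1)/2, 1/2)`.
-/

open MeasureTheory Real Set Topology

namespace Function.Periodic

variable {f : ℝ → ℝ} {T : ℝ}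

theorem tendsto_intervalIntegral_div_atTop (hf : Periodic f T) (hT : 0 < T)
    (h_int : IntervalIntegrable f volume 0 T) :
    Tendsto (fun t => (∫ x in 0..t, f x) / t) atTop (𝓝 ((∫ x in 0..T, f x) / T)) := by
  set I := ∫ x in 0..T, f x
  set S := (fun t => ∫ x in 0..t, f x) '' Icc 0 T
  have h_floor : Tendsto (fun t : ℝ => (⌊t / T⌋ : ℝ) / t) atTop (𝓝 T⁻¹) := by
    have h := (tendsto_nat_floor_div_atTop (R := ℝ)).comp (tendsto_id.atTop_div_const hT)
    rw [← one_mul T⁻¹]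
    refine (h.mul_const T⁻¹).congr' ?_
    filter_upwards [eventually_gt_atTop 0] with t ht
    simp only [Function.comp_apply, id, natCast_floor_eq_intCast_floor (div_nonneg ht.le hT.le)]
    field_simp
  have h_lim (c : ℝ) : Tendsto (fun t => (c + ⌊t / T⌋ • I) / t) atTop (𝓝 (I / T)) := by
    have h := (tendsto_const_nhds (x := c)).div_atTop tendsto_id |>.add (h_floor.mul_const I)
    rw [zero_add, inv_mul_eq_div] at h
    refine h.congr' ?_
    filter_upwards [eventually_gt_atTop 0] with t ht
    simp only [id, zsmul_eq_mul]
    ring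
  refine tendsto_of_tendsto_of_tendsto_of_le_of_le' (h_lim (sInf S)) (h_lim (sSup S)) ?_ ?_ <;>
    filter_upwards [eventually_gt_atTop 0] with t ht <;> gcongr
  · exact hf.sInf_add_zsmul_le_integral_of_pos h_int hT t
  · exact hf.integral_le_sSup_add_zsmul_of_pos h_int hT t

theorem tendsto_one_div_two_mul_intervalIntegral_neg (hf : Periodic f T) (hT : 0 < T)
    (h_int : IntervalIntegrable f volume 0 T) :
    Tendsto (fun τ => 1 / (2 * τ) * ∫ t in (-τ)..τ, f t) atTop
      (𝓝 ((∫ t in 0..T, f t) / T)) := by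
  have hf_int := hf.intervalIntegrable₀ hT.ne' h_int
  have hf_neg : Periodic (fun x => f (-x)) T := fun x => by
    simp only [neg_add', hf.sub_eq]
  have hf_neg_int : IntervalIntegrable (fun x => f (-x)) volume 0 T := by
    simpa using (IntervalIntegrable.iff_comp_neg).mp (hf_int 0 (-T))
  have hf_neg_integral : ∫ x in 0..T, f (-x) = ∫ x in 0..T, f x := by
    rw [integral_comp_neg, neg_zero, ← zero_add T, ← hf.intervalIntegral_add_eq (-T) 0]
    simp
  have h := ((hf.tendsto_intervalIntegral_div_atTop hT h_int).add
    (hf_neg.tendsto_intervalIntegral_div_atTop hT hf_neg_int)).const_mul 2⁻¹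
  rw [hf_neg_integral, ← two_mul, inv_mul_cancel_left₀ two_ne_zero] at h
  refine h.congr' ?_
  filter_upwards [eventually_gt_atTop 0] with τ hτ
  rw [integral_comp_neg, neg_zero,
    ← integral_add_adjacent_intervals (hf_int (-τ) 0) (hf_int 0 τ)]
  field_simp
  ring

theorem intervalIntegral_comp_mul_sub {E : Type*} [NormedAddCommGroup E] [NormedSpace ℝ E]
    {g : ℝ → E} {c : ℝ} (hg : Periodic g c) {ω : ℝ} (hω : ω ≠ 0) (φ : ℝ) :
    ∫ t in 0..c / ω, g (ω * t - φ) = ω⁻¹ • ∫ s in 0..c, g s := by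
  rw [integral_comp_mul_sub g hω, mul_zero, zero_sub, mul_div_cancel₀ c hω, sub_eq_neg_add,
    hg.intervalIntegral_add_eq (-φ) 0, zero_add]

theorem tendsto_one_div_two_mul_intervalIntegral_neg_comp_mul_sub {g : ℝ → ℝ} {c : ℝ}
    (hg : Periodic g c) (hc : 0 < c) (hg_cont : Continuous g) {ω : ℝ} (hω : 0 < ω) (φ : ℝ) :
    Tendsto (fun τ => 1 / (2 * τ) * ∫ t in (-τ)..τ, g (ω * t - φ)) atTop
      (𝓝 ((∫ s in 0..c, g s) / c)) := by
  have h := ((hg.sub_const φ).const_mul ω).tendsto_one_div_two_mul_intervalIntegral_neg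
    (by positivity) ((hg_cont.comp (by fun_prop)).intervalIntegrable _ _)
  rw [inv_mul_eq_div, hg.intervalIntegral_comp_mul_sub hω.ne', smul_eq_mul] at h
  convert h using 2
  field_simp

end Function.Periodic

namespace ProbabilityTheory

theorem beta_eq_intervalIntegral {α β : ℝ} (hα : 0 < α) (hβ : 0 < β) :
    beta α β = ∫ x in 0..1, x ^ (α - 1) * (1 - x) ^ (β - 1) := by
  have h_real : Complex.betaIntegral α β =
      ((∫ x in 0..1, x ^ (α - 1) * (1 - x) ^ (β - 1) : ℝ) : ℂ) := by
    rw [Complex.betaIntegral, ← integral_ofReal]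
    refine integral_congr fun x hx => ?_
    rw [uIcc_of_le zero_le_one] at hx
    simp only [Complex.ofReal_mul, Complex.ofReal_cpow hx.1,
      Complex.ofReal_cpow (sub_nonneg.2 hx.2)]
    push_cast
    rfl
  rw [beta_eq_betaIntegralReal α β hα hβ, h_real, Complex.ofReal_re]

theorem beta_eq_two_mul_integral_sin_rpow {γ : ℝ} (hγ : -1 < γ) :
    beta ((γ + 1) / 2) (1 / 2) = 2 * ∫ t in 0..π / 2, sin t ^ γ := by
  have h_sin_cos_pos {t : ℝ} (ht : t ∈ Ioo 0 (π / 2)) : 0 < sin t ∧ 0 < cos t :=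
    ⟨sin_pos_of_pos_of_lt_pi ht.1 (by linarith [ht.2, pi_pos]),
      cos_pos_of_mem_Ioo ⟨by linarith [ht.1, pi_pos], ht.2⟩⟩
  have h_subst := integral_Icc_deriv_smul_of_deriv_nonneg (f := fun t => sin t ^ 2)
    (f' := fun t => 2 * sin t * cos t)
    (g := fun x => x ^ ((γ + 1) / 2 - 1) * (1 - x) ^ (1 / 2 - 1 : ℝ))
    (by fun_prop) (fun t _ => by simpa using (hasDerivAt_sin t).fun_pow 2)
    (fun t ht => by obtain ⟨hs, hc⟩ := h_sin_cos_pos ht; positivity)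
    (by positivity : (0 : ℝ) ≤ π / 2)
  simp only [sin_zero, sin_pi_div_two, zero_pow two_ne_zero, one_pow] at h_subst
  rw [beta_eq_intervalIntegral (by linarith) one_half_pos, integral_of_le zero_le_one,
    ← integral_Icc_eq_integral_Ioc, ← h_subst, integral_Icc_eq_integral_Ioo,
    integral_of_le (by positivity), integral_Ioc_eq_integral_Ioo,
    ← MeasureTheory.integral_const_mul]
  refine setIntegral_congr_fun measurableSet_Ioo fun t ht => ?_
  obtain ⟨hs, hc⟩ := h_sin_cos_pos ht
  rw [smul_eq_mul, ← cos_sq', ← rpow_natCast_mul hs.le, ← rpow_natCast_mul hc.le,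
    show ((2 : ℕ) : ℝ) * ((γ + 1) / 2 - 1) = γ - 1 by push_cast; ring,
    show ((2 : ℕ) : ℝ) * (1 / 2 - 1) = -1 by norm_num, rpow_neg_one, rpow_sub_one hs.ne']
  field_simp

end ProbabilityTheory

theorem integral_abs_sin_rpow_two_pi {γ : ℝ} (hγ : 0 ≤ γ) :
    ∫ s in 0..2 * π, |sin s| ^ γ = 4 * ∫ t in 0..π / 2, sin t ^ γ := by
  have h_int (a b : ℝ) : IntervalIntegrable (fun s => |sin s| ^ γ) volume a b :=
    Continuous.intervalIntegrable (by fun_prop (disch := exact hγ)) a b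
  have h_per : Function.Periodic (fun s => |sin s| ^ γ) π := fun s => by simp [sin_add_pi]
  have h_half : ∫ s in 0..π, |sin s| ^ γ = 2 * ∫ t in 0..π / 2, sin t ^ γ := by
    have h_refl : ∫ s in π / 2..π, |sin s| ^ γ = ∫ s in 0..π / 2, |sin s| ^ γ := by
      simpa [sin_pi_sub, show π - π / 2 = π / 2 by ring] using
        (integral_comp_sub_left (fun s => |sin s| ^ γ) π (a := 0) (b := π / 2)).symm
    have h_abs : ∫ s in 0..π / 2, |sin s| ^ γ = ∫ t in 0..π / 2, sin t ^ γ := by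
      refine integral_congr fun t ht => ?_
      rw [uIcc_of_le (by positivity)] at ht
      simp only [abs_of_nonneg (sin_nonneg_of_nonneg_of_le_pi ht.1 (by linarith [ht.2, pi_pos]))]
    rw [← integral_add_adjacent_intervals (h_int 0 (π / 2)) (h_int _ π), h_refl, h_abs]
    ring
  have h_two := h_per.intervalIntegral_add_zsmul_eq 2 0 h_int
  simp only [zero_add, two_zsmul, ← two_mul] at h_two
  rw [h_two, h_half]
  ring

theorem integral_abs_cos_rpow_two_pi (γ : ℝ) :
    ∫ s in 0..2 * π, |cos s| ^ γ = ∫ s in 0..2 * π, |sin s| ^ γ := by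
  have h_per : Function.Periodic (fun s => |sin s| ^ γ) (2 * π) := fun s => by
    simp [sin_add_two_pi]
  simp only [← sin_add_pi_div_two]
  rw [integral_comp_add_right (fun s => |sin s| ^ γ), zero_add, add_comm,
    h_per.intervalIntegral_add_eq (π / 2) 0, zero_add]

theorem integral_abs_sin_rpow_add_abs_cos_rpow_two_pi {γ : ℝ} (hγ : 0 ≤ γ) :
    ∫ s in 0..2 * π, (|sin s| ^ γ + |cos s| ^ γ) =
      4 * ProbabilityTheory.beta ((γ + 1) / 2) (1 / 2) := by
  have h_int (f : ℝ → ℝ) (hf : Continuous f) :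
      IntervalIntegrable (fun s => |f s| ^ γ) volume 0 (2 * π) :=
    Continuous.intervalIntegrable (by fun_prop (disch := exact hγ)) _ _
  rw [integral_add (h_int _ continuous_sin) (h_int _ continuous_cos),
    integral_abs_cos_rpow_two_pi, integral_abs_sin_rpow_two_pi hγ,
    ProbabilityTheory.beta_eq_two_mul_integral_sin_rpow (by linarith)]
  ring

theorem exists_eq_sqrt_mul_cos_and_eq_sqrt_mul_sin (a b : ℝ) :
    ∃ φ, a = √(a ^ 2 + b ^ 2) * cos φ ∧ b = √(a ^ 2 + b ^ 2) * sin φ := by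
  refine ⟨Complex.arg (a + b * Complex.I), ?_, ?_⟩
  · simpa [Complex.norm_add_mul_I] using (Complex.norm_mul_cos_arg (a + b * Complex.I)).symm
  · simpa [Complex.norm_add_mul_I] using (Complex.norm_mul_sin_arg (a + b * Complex.I)).symm

/-- The time average of the elliptic component of the Lagrangian descriptor converges:
lim_{τ→∞} (1/(2τ)) M^e_γ(τ) = (2/π)(ωR)^γ B((γ+1)/2, 1/2), where
B(a,b) = Γ(a)Γ(b)/Γ(a+b) is the Beta function; the limit depends only on the radius R
of the circle traced by the bath mode, hence is constant on each periodic orbit. -/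
theorem stmt_11 (ω : ℝ) (hω : 0 < ω) (q0 p0 : ℝ) (R : ℝ)
    (hR : R = Real.sqrt (q0 ^ 2 + p0 ^ 2))
    (γ : ℝ) (hγ : γ ∈ Set.Ioc (0 : ℝ) 1)
    (Me : ℝ → ℝ)
    (hMe : ∀ τ : ℝ, Me τ =
      ∫ t in (-τ)..τ,
        (|ω * (p0 * Real.cos (ω * t) - q0 * Real.sin (ω * t))| ^ γ +
         |-(ω * (q0 * Real.cos (ω * t) + p0 * Real.sin (ω * t)))| ^ γ))
    (Beta : ℝ → ℝ → ℝ)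
    (hBeta : ∀ a b : ℝ, Beta a b = Real.Gamma a * Real.Gamma b / Real.Gamma (a + b)) :
    Filter.Tendsto (fun τ : ℝ => 1 / (2 * τ) * Me τ) Filter.atTop
      (nhds (2 / Real.pi * (ω * R) ^ γ * Beta ((γ + 1) / 2) (1 / 2))) := by
  obtain rfl : Beta = ProbabilityTheory.beta := funext₂ hBeta
  obtain ⟨φ, hq, hp⟩ := exists_eq_sqrt_mul_cos_and_eq_sqrt_mul_sin q0 p0
  rw [← hR] at hq hp
  have hωR : 0 ≤ ω * R := mul_nonneg hω.le (hR ▸ sqrt_nonneg _)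
  set g : ℝ → ℝ := fun s => |sin s| ^ γ + |cos s| ^ γ
  have h_integrand (t : ℝ) :
      |ω * (p0 * cos (ω * t) - q0 * sin (ω * t))| ^ γ +
        |-(ω * (q0 * cos (ω * t) + p0 * sin (ω * t)))| ^ γ =
      (ω * R) ^ γ * g (ω * t - φ) := by
    have hsin : ω * (p0 * cos (ω * t) - q0 * sin (ω * t)) = -(ω * R * sin (ω * t - φ)) := by
      rw [hq, hp, sin_sub]; ring
    have hcos : ω * (q0 * cos (ω * t) + p0 * sin (ω * t)) = ω * R * cos (ω * t - φ) := by
      rw [hq, hp, cos_sub]; ring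
    simp only [g, hsin, hcos, abs_neg, abs_mul, abs_of_nonneg hωR, mul_rpow hωR (abs_nonneg _)]
    ring
  have hg : Function.Periodic g (2 * π) := fun s => by simp [g]
  have h_lim := (hg.tendsto_one_div_two_mul_intervalIntegral_neg_comp_mul_sub two_pi_pos
    (by fun_prop (disch := exact hγ.1.le)) hω φ).const_mul ((ω * R) ^ γ)
  rw [integral_abs_sin_rpow_add_abs_cos_rpow_two_pi hγ.1.le] at h_lim
  convert h_lim using 2 with τ
  · simp only [hMe, h_integrand, intervalIntegral.integral_const_mul]
    ring
  · field_simp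
    ring
end

section
/- The Lagrangian descriptor attains its global minimum at the NHIM: for every τ > 0 and γ ∈ (0, 1], the hyperbolic component satisfies M^h_γ(τ) ≥ 0 with M^h_γ(τ) = 0 if and only if q₁⁰ = p₁⁰ = 0; consequently, for fixed bath initial conditions the full descriptor M_γ = M^h_γ + M^e_γ (whose elliptic part does not depend on (q₁⁰, p₁⁰)) attains its global minimum over (q₁⁰, p₁⁰) ∈ ℝ² precisely at (0, 0), and strictly exceeds that minimum at every other point. -/
open Filter intervalIntegral

/-- The Lagrangian descriptor attains its global minimum at the NHIM: for every τ > 0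
and γ ∈ (0,1], the hyperbolic component M^h_γ (viewed as a function of the initial
condition (q₁⁰, p₁⁰)) satisfies M^h_γ ≥ 0, with M^h_γ = 0 iff q₁⁰ = p₁⁰ = 0; hence,
for fixed bath initial conditions (the elliptic part Me being a constant independent
of (q₁⁰, p₁⁰)), the full descriptor M_γ = M^h_γ + M^e_γ attains its global minimum
over (q₁⁰, p₁⁰) ∈ ℝ² precisely at (0, 0), strictly exceeding it elsewhere. -/
theorem stmt_12 (lam : ℝ) (hlam : 0 < lam) (q₁0 p₁0 : ℝ)
    (γ : ℝ) (hγ : γ ∈ Set.Ioc (0 : ℝ) 1) (τ : ℝ) (hτ : 0 < τ)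
    (Mh : ℝ → ℝ → ℝ)
    (hMh : ∀ a b : ℝ, Mh a b =
      ∫ t in (-τ)..τ,
        (|lam / 2 * ((a + b) * Real.exp (lam * t) - (a - b) * Real.exp (-(lam * t)))| ^ γ +
         |lam / 2 * ((a + b) * Real.exp (lam * t) + (a - b) * Real.exp (-(lam * t)))| ^ γ)) :
    0 ≤ Mh q₁0 p₁0 ∧
    (Mh q₁0 p₁0 = 0 ↔ q₁0 = 0 ∧ p₁0 = 0) ∧
    (∀ Me : ℝ, (∀ a b : ℝ, Mh 0 0 + Me ≤ Mh a b + Me) ∧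
      (∀ a b : ℝ, ¬(a = 0 ∧ b = 0) → Mh 0 0 + Me < Mh a b + Me)) := by
  have hγ0 : (0:ℝ) < γ := hγ.1
  have hnn : ∀ a b : ℝ, 0 ≤ Mh a b := by
    intro a b
    rw [hMh]
    apply intervalIntegral.integral_nonneg (by linarith)
    intro t _
    have h1 : (0:ℝ) ≤ |lam / 2 * ((a + b) * Real.exp (lam * t) - (a - b) * Real.exp (-(lam * t)))| ^ γ :=
      Real.rpow_nonneg (abs_nonneg _) γ
    have h2 : (0:ℝ) ≤ |lam / 2 * ((a + b) * Real.exp (lam * t) + (a - b) * Real.exp (-(lam * t)))| ^ γ :=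
      Real.rpow_nonneg (abs_nonneg _) γ
    linarith
  have h00 : Mh 0 0 = 0 := by
    rw [hMh]
    simp [Real.zero_rpow hγ0.ne']
  have key : ∀ a b : ℝ, ¬(a = 0 ∧ b = 0) → 0 < Mh a b := by
    intro a b hab
    rw [hMh]
    apply intervalIntegral.intervalIntegral_pos_of_pos _ _ (by linarith : -τ < τ)
    · apply Continuous.intervalIntegrable
      have c1 : Continuous fun t : ℝ =>
          lam / 2 * ((a + b) * Real.exp (lam * t) - (a - b) * Real.exp (-(lam * t))) := by
        fun_prop
      have c2 : Continuous fun t : ℝ =>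
          lam / 2 * ((a + b) * Real.exp (lam * t) + (a - b) * Real.exp (-(lam * t))) := by
        fun_prop
      exact (c1.abs.rpow_const (fun x => Or.inr hγ0.le)).add
        (c2.abs.rpow_const (fun x => Or.inr hγ0.le))
    · intro t
      set f := lam / 2 * ((a + b) * Real.exp (lam * t) - (a - b) * Real.exp (-(lam * t))) with hf
      set g := lam / 2 * ((a + b) * Real.exp (lam * t) + (a - b) * Real.exp (-(lam * t))) with hg
      have hne : f ≠ 0 ∨ g ≠ 0 := by
        by_contra h
        push_neg at h
        obtain ⟨hf0, hg0⟩ := h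
        have hl : lam / 2 ≠ 0 := by positivity
        have e1 : Real.exp (lam * t) > 0 := Real.exp_pos _
        have e2 : Real.exp (-(lam * t)) > 0 := Real.exp_pos _
        have h1 : (a + b) * Real.exp (lam * t) - (a - b) * Real.exp (-(lam * t)) = 0 := by
          rcases mul_eq_zero.mp hf0 with h | h
          · exact absurd h hl
          · exact h
        have h2 : (a + b) * Real.exp (lam * t) + (a - b) * Real.exp (-(lam * t)) = 0 := by
          rcases mul_eq_zero.mp hg0 with h | h
          · exact absurd h hl
          · exact h
        have hab1 : a + b = 0 := by
          have : (a + b) * Real.exp (lam * t) = 0 := by linarith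
          rcases mul_eq_zero.mp this with h | h
          · exact h
          · exact absurd h e1.ne'
        have hab2 : a - b = 0 := by
          have : (a - b) * Real.exp (-(lam * t)) = 0 := by linarith
          rcases mul_eq_zero.mp this with h | h
          · exact h
          · exact absurd h e2.ne'
        exact hab ⟨by linarith, by linarith⟩
      rcases hne with h | h
      · have : 0 < |f| ^ γ := Real.rpow_pos_of_pos (abs_pos.mpr h) γ
        have : (0:ℝ) ≤ |g| ^ γ := Real.rpow_nonneg (abs_nonneg _) γ
        linarith [Real.rpow_pos_of_pos (abs_pos.mpr h) γ,
          Real.rpow_nonneg (abs_nonneg g) γ]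
      · linarith [Real.rpow_pos_of_pos (abs_pos.mpr h) γ,
          Real.rpow_nonneg (abs_nonneg f) γ]
  refine ⟨hnn q₁0 p₁0, ?_, ?_⟩
  · constructor
    · intro h
      by_contra hc
      exact (key q₁0 p₁0 hc).ne' h
    · rintro ⟨h1, h2⟩
      rw [h1, h2]; exact h00
  · intro Me
    constructor
    · intro a b
      have := hnn a b
      linarith [hnn a b, h00.le]
    · intro a b hab
      have := key a b hab
      linarith [key a b hab]
end

section
/- Let λ, ω₂ > 0 and let 𝕁 be the 4×4 real matrix [[−λ, −ω₂, ω₂, λ+ω₂], [−λ, −ω₂, λ+ω₂, λ+2ω₂], [−λ, 0, λ, λ], [0, −ω₂, ω₂, ω₂]] (the Jacobian of the symplectically transformed 2-degree-of-freedom quadratic Hamiltonian vector field at the origin). Then its characteristic polynomial is det(𝕁 − βI) = β⁴ − λ²β² + ω₂²β² − λ²ω₂², and the eigenvalues of 𝕁 over ℂ are exactly λ, −λ, iω₂, −iω₂. -/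
theorem my_det_fin_four {R : Type*} [CommRing R] (A : Matrix (Fin 4) (Fin 4) R) :
    A.det =
      A 0 0 * (A 1 1 * A 2 2 * A 3 3 - A 1 1 * A 2 3 * A 3 2 - A 1 2 * A 2 1 * A 3 3
             + A 1 2 * A 2 3 * A 3 1 + A 1 3 * A 2 1 * A 3 2 - A 1 3 * A 2 2 * A 3 1)
    - A 0 1 * (A 1 0 * A 2 2 * A 3 3 - A 1 0 * A 2 3 * A 3 2 - A 1 2 * A 2 0 * A 3 3
             + A 1 2 * A 2 3 * A 3 0 + A 1 3 * A 2 0 * A 3 2 - A 1 3 * A 2 2 * A 3 0)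
    + A 0 2 * (A 1 0 * A 2 1 * A 3 3 - A 1 0 * A 2 3 * A 3 1 - A 1 1 * A 2 0 * A 3 3
             + A 1 1 * A 2 3 * A 3 0 + A 1 3 * A 2 0 * A 3 1 - A 1 3 * A 2 1 * A 3 0)
    - A 0 3 * (A 1 0 * A 2 1 * A 3 2 - A 1 0 * A 2 2 * A 3 1 - A 1 1 * A 2 0 * A 3 2
             + A 1 1 * A 2 2 * A 3 0 + A 1 2 * A 2 0 * A 3 1 - A 1 2 * A 2 1 * A 3 0) := by
  rw [Matrix.det_succ_row_zero]
  simp only [Fin.sum_univ_four, Matrix.det_fin_three, Matrix.submatrix_apply]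
  norm_num [Fin.succAbove, Fin.lt_def, Fin.ext_iff]
  simp +decide [show (2:Fin 3).succ = 3 from rfl, show Fin.castSucc (2:Fin 3) = 2 from rfl]
  ring

/-- The Jacobian 𝕁 of the symplectically transformed 2-DoF quadratic Hamiltonian
vector field at the origin has characteristic polynomial
det(𝕁 − βI) = β⁴ − λ²β² + ω₂²β² − λ²ω₂², and its eigenvalues over ℂ are exactly
λ, −λ, iω₂, −iω₂. -/
theorem stmt_15 (lam ω₂ : ℝ) (hlam : 0 < lam) (hω₂ : 0 < ω₂)
    (J : Matrix (Fin 4) (Fin 4) ℝ)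
    (hJ : J = !![-lam, -ω₂, ω₂, lam + ω₂;
                 -lam, -ω₂, lam + ω₂, lam + 2 * ω₂;
                 -lam, 0, lam, lam;
                 0, -ω₂, ω₂, ω₂]) :
    (∀ β : ℝ, (J - β • (1 : Matrix (Fin 4) (Fin 4) ℝ)).det =
      β ^ 4 - lam ^ 2 * β ^ 2 + ω₂ ^ 2 * β ^ 2 - lam ^ 2 * ω₂ ^ 2) ∧
    spectrum ℂ (J.map (Complex.ofReal)) =
      {(lam : ℂ), -(lam : ℂ), (ω₂ : ℂ) * Complex.I, -((ω₂ : ℂ) * Complex.I)} := by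
  subst hJ
  constructor
  · intro β
    rw [my_det_fin_four]
    simp [Matrix.smul_apply, Matrix.one_apply]
    ring
  · ext z
    have hdet : ((algebraMap ℂ (Matrix (Fin 4) (Fin 4) ℂ)) z -
        (!![-lam, -ω₂, ω₂, lam + ω₂;
            -lam, -ω₂, lam + ω₂, lam + 2 * ω₂;
            -lam, 0, lam, lam;
            0, -ω₂, ω₂, ω₂] : Matrix (Fin 4) (Fin 4) ℝ).map Complex.ofReal).det =
        (z - lam) * (z + lam) * (z - ω₂ * Complex.I) * (z + ω₂ * Complex.I) := by
      have h1 : ((z : ℂ) - ω₂ * Complex.I) * (z + ω₂ * Complex.I) = z ^ 2 + ω₂ ^ 2 := by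
        linear_combination (-(ω₂ : ℂ) ^ 2) * Complex.I_mul_I
      rw [my_det_fin_four]
      simp [Matrix.algebraMap_matrix_apply, Matrix.map_apply]
      rw [mul_assoc ((z - (lam:ℂ)) * (z + lam)), h1]
      ring
    rw [spectrum.mem_iff, Matrix.isUnit_iff_isUnit_det, hdet, isUnit_iff_ne_zero, not_not]
    simp only [mul_eq_zero, sub_eq_zero, add_eq_zero_iff_eq_neg, Set.mem_insert_iff,
      Set.mem_singleton_iff]
    tauto
end
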